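/- arXiv:1405.1918 — 6 statements merged into one kernel-verified Lean document; each statement's English description precedes it below -/
import Mathlib

section
/- For all n ∈ ℕ₀ and v ∈ ℂ, one has |(v)_n|/n! ≤ (1+n)^{|v|}. -/
/-! The triangle inequality gives `|(v)_n|/n! ≤ ∏_{i<n} (|v|+i)/(i+1)`. By Bernoulli's inequality
(or trivially when `|v| ≤ 1`) each factor is at most `((i+2)/(i+1))^|v|`, and these telescope
to `(n+1)^|v|`. -/

open Complex Finset

/-- The Pochhammer symbol (rising factorial) `(z)_n = z(z+1)⋯(z+n-1)`. -/
noncomputable def poch (z : ℂ) (n : ℕ) : ℂ := ∏ i ∈ Finset.range n, (z + i)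

theorem one_add_sub_one_mul_le_rpow_one_add {t r : ℝ} (ht : 0 ≤ t) (hr : 0 ≤ r) :
    1 + (r - 1) * t ≤ (1 + t) ^ r := by
  rcases le_or_gt r 1 with hr1 | hr1
  · calc 1 + (r - 1) * t ≤ 1 := by nlinarith
      _ ≤ (1 + t) ^ r := Real.one_le_rpow (by linarith) hr
  · calc 1 + (r - 1) * t ≤ 1 + r * t := by nlinarith
      _ ≤ (1 + t) ^ r := one_add_mul_self_le_rpow_one_add (by linarith) hr1.le

theorem prod_range_add_div_le_rpow {r : ℝ} (hr : 0 ≤ r) (n : ℕ) :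
    ∏ i ∈ range n, (r + i) / (i + 1) ≤ ((n : ℝ) + 1) ^ r := by
  induction n with
  | zero => simp
  | succ n ih =>
    have hn : (0 : ℝ) < n + 1 := by positivity
    have step : (r + n) / (n + 1) ≤ ((n + 2) / (n + 1) : ℝ) ^ r := by
      have hl : (r + n) / (n + 1) = 1 + (r - 1) * (1 / (n + 1)) := by field_simp; ring
      have hq : ((n + 2) / (n + 1) : ℝ) = 1 + 1 / (n + 1) := by field_simp; ring
      rw [hl, hq]
      exact one_add_sub_one_mul_le_rpow_one_add (one_div_pos.2 hn).le hr
    calc ∏ i ∈ range (n + 1), (r + i) / (i + 1)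
        ≤ ((n : ℝ) + 1) ^ r * ((n + 2) / (n + 1) : ℝ) ^ r := by
          rw [prod_range_succ]
          exact mul_le_mul ih step (by positivity) (by positivity)
      _ = ((n + 1 : ℕ) + 1 : ℝ) ^ r := by
          rw [← Real.mul_rpow hn.le (by positivity), mul_div_cancel₀ _ hn.ne']
          push_cast
          congr 1
          ring

theorem poch_upper_bound (n : ℕ) (v : ℂ) :
    ‖poch v n‖ / n.factorial ≤ (1 + (n : ℝ)) ^ ‖v‖ := by
  have hfac : (n.factorial : ℝ) = ∏ i ∈ range n, ((i : ℝ) + 1) := by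
    rw [← prod_range_add_one_eq_factorial]
    push_cast
    rfl
  calc ‖poch v n‖ / n.factorial = ∏ i ∈ range n, ‖v + i‖ / ((i : ℝ) + 1) := by
        rw [poch, norm_prod, prod_div_distrib, hfac]
    _ ≤ ∏ i ∈ range n, (‖v‖ + i) / ((i : ℝ) + 1) := by
        refine prod_le_prod (fun i _ => by positivity) fun i _ => ?_
        gcongr
        simpa using norm_add_le v (i : ℂ)
    _ ≤ (1 + (n : ℝ)) ^ ‖v‖ := by
        rw [add_comm 1]
        exact prod_range_add_div_le_rpow (norm_nonneg v) n
end

section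
/- For all k, n ∈ ℕ₀ with k ≤ n and v ∈ ℂ, one has |(k+v)_{n−k}| ≤ (1+n)^{|v|} · n!/k!. -/
open Complex Finset

lemma poch_step (t : ℝ) (ht : 0 ≤ t) (m : ℕ) :
    ((m : ℝ) + t) * (1 + m) ^ t ≤ ((m : ℝ) + 1) * (2 + m) ^ t := by
  have h1 : (0:ℝ) ≤ 1 + m := by positivity
  rcases le_or_gt t 1 with h | h
  · apply mul_le_mul
    · linarith
    · exact Real.rpow_le_rpow h1 (by linarith) ht
    · positivity
    · positivity
  · have hs : (0:ℝ) < 1 + (m:ℝ) := by positivity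
    have key : (2 + (m:ℝ)) ^ t = (1 + m) ^ t * (1 + 1/(1+(m:ℝ))) ^ t := by
      rw [← Real.mul_rpow (by positivity) (by positivity)]
      congr 1
      field_simp
      ring
    rw [key, mul_comm ((m:ℝ)+t) _, ← mul_assoc, mul_comm ((m:ℝ)+1) _, mul_assoc]
    apply mul_le_mul_of_nonneg_left _ (Real.rpow_nonneg (by positivity) t)
    have bern : 1 + t * (1/(1+(m:ℝ))) ≤ (1 + 1/(1+(m:ℝ))) ^ t :=
      one_add_mul_self_le_rpow_one_add (le_trans (by norm_num : (-1:ℝ) ≤ 0) (by positivity)) h.le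
    have : ((m:ℝ) + 1) * (1 + t * (1/(1+(m:ℝ)))) = m + 1 + t := by
      field_simp
      ring
    nlinarith [bern, Real.rpow_nonneg (by positivity : (0:ℝ) ≤ 1 + 1/(1+(m:ℝ))) t]

lemma poch_prod_bound (t : ℝ) (ht : 0 ≤ t) (k : ℕ) :
    ∀ m, k ≤ m → ∏ j ∈ Finset.range (m - k), ((k : ℝ) + j + t) ≤
      (1 + (m : ℝ)) ^ t * (m.factorial / k.factorial : ℝ) := by
  intro m hm
  induction m, hm using Nat.le_induction with
  | base =>
    rw [Nat.sub_self]
    simp only [Finset.range_zero, Finset.prod_empty]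
    rw [div_self (by positivity), mul_one]
    exact Real.one_le_rpow (by simp) ht
  | succ m hm ih =>
    have hsub : m + 1 - k = (m - k) + 1 := by omega
    rw [hsub, Finset.prod_range_succ]
    have hcast : (k : ℝ) + ((m - k : ℕ) : ℝ) + t = (m : ℝ) + t := by
      have : ((m - k : ℕ) : ℝ) = (m : ℝ) - k := by
        push_cast [Nat.cast_sub hm]; ring
      rw [this]; ring
    rw [hcast]
    calc (∏ j ∈ Finset.range (m - k), ((k : ℝ) + j + t)) * ((m:ℝ) + t)
        ≤ ((1 + (m : ℝ)) ^ t * (m.factorial / k.factorial : ℝ)) * ((m:ℝ) + t) := by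
          apply mul_le_mul_of_nonneg_right ih (by positivity)
      _ = (((m:ℝ) + t) * (1 + m) ^ t) * (m.factorial / k.factorial : ℝ) := by ring
      _ ≤ (((m:ℝ) + 1) * (2 + m) ^ t) * (m.factorial / k.factorial : ℝ) := by
          apply mul_le_mul_of_nonneg_right (poch_step t ht m) (by positivity)
      _ = (1 + ((m:ℕ)+1 : ℕ) : ℝ) ^ t * ((m+1).factorial / k.factorial : ℝ) := by
          rw [Nat.factorial_succ]
          push_cast
          rw [show (1 + ((m:ℝ)+1)) = 2 + m by ring]
          ring
  
theorem poch_shift_upper_bound (k n : ℕ) (hkn : k ≤ n) (v : ℂ) :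
    ‖poch ((k : ℂ) + v) (n - k)‖ ≤
      (1 + (n : ℝ)) ^ ‖v‖ * (n.factorial / k.factorial : ℝ) := by
  have h1 : ‖poch ((k : ℂ) + v) (n - k)‖ ≤
      ∏ j ∈ Finset.range (n - k), ((k : ℝ) + j + ‖v‖) := by
    refine le_trans (norm_prod_le _ _) (Finset.prod_le_prod (fun i _ => norm_nonneg _) ?_)
    intro i _
    calc ‖(k : ℂ) + v + i‖ = ‖((k : ℂ) + i) + v‖ := by ring_nf
      _ ≤ ‖((k : ℂ) + i)‖ + ‖v‖ := norm_add_le _ _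
      _ ≤ (k : ℝ) + i + ‖v‖ := by
          gcongr
          rw [show ((k:ℂ) + i) = ((k + i : ℕ) : ℂ) by push_cast; ring]
          rw [Complex.norm_natCast]
          push_cast
          exact le_rfl
  exact le_trans h1 (poch_prod_bound ‖v‖ (norm_nonneg v) k n hkn)
end

section
/- For all k, n ∈ ℕ₀, v ∈ ℂ, and u ∈ ℂ with Re u > 0, one has |(k+v)_n/(k+u)_n| ≤ max{(Re u)^{−1}, 1} · (1+n)^{1+|v|}. -/
/-! Bound `‖(k + v)_n‖` above by `∏ (k + i + ‖v‖)` and `‖(k + u)_n‖` below by `∏ (k + i + Re u)`.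
The numerator product is compared with `∏ (k + 1 + i)` by the telescoping bound
`c^a ∏ (c + i + a - 1) ≤ (c + n)^a ∏ (c + i)` for `c = k + 1`, each step of which is Bernoulli's
inequality `1 + (a - 1) x ≤ (1 + x)^a`. In the denominator only the first factor costs the constant,
`k + 1 ≤ max (Re u)⁻¹ 1 * (k + Re u)`, while the others dominate `k + i`; the leftover ratio
`(k + n) / (k + 1) ≤ 1 + n` is the extra `1` in the exponent. -/

open Complex Finset

lemma one_add_sub_one_mul_le_one_add_rpow {x p : ℝ} (hx : 0 ≤ x) (hp : 0 ≤ p) :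
    1 + (p - 1) * x ≤ (1 + x) ^ p := by
  rcases le_total 1 p with hp1 | hp1
  · calc 1 + (p - 1) * x ≤ 1 + p * x := by nlinarith
      _ ≤ (1 + x) ^ p := one_add_mul_self_le_rpow_one_add (by linarith) hp1
  · calc 1 + (p - 1) * x ≤ 1 := by nlinarith
      _ ≤ (1 + x) ^ p := Real.one_le_rpow (by linarith) hp

lemma rpow_mul_add_sub_one_le {x p : ℝ} (hx : 0 < x) (hp : 0 ≤ p) :
    x ^ p * (x + (p - 1)) ≤ (x + 1) ^ p * x := by
  have hbern := one_add_sub_one_mul_le_one_add_rpow (inv_nonneg.mpr hx.le) hp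
  have hsplit : (x + 1) ^ p = x ^ p * (1 + x⁻¹) ^ p := by
    rw [← Real.mul_rpow hx.le (by positivity), mul_add, mul_inv_cancel₀ hx.ne', mul_one]
  calc x ^ p * (x + (p - 1)) = x ^ p * x * (1 + (p - 1) * x⁻¹) := by field_simp
    _ ≤ x ^ p * x * (1 + x⁻¹) ^ p := by gcongr
    _ = (x + 1) ^ p * x := by rw [hsplit]; ring

lemma rpow_mul_prod_add_sub_one_le {c p : ℝ} (hc : 0 < c) (hp : 0 ≤ p) (hcp : 1 ≤ c + p)
    (n : ℕ) :
    c ^ p * ∏ i ∈ range n, (c + i + (p - 1)) ≤ (c + n) ^ p * ∏ i ∈ range n, (c + i) := by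
  induction n with
  | zero => simp
  | succ n ih =>
    have hstep := rpow_mul_add_sub_one_le (x := c + n) (by positivity) hp
    rw [prod_range_succ, prod_range_succ, ← mul_assoc, Nat.cast_succ, ← add_assoc]
    calc c ^ p * (∏ i ∈ range n, (c + i + (p - 1))) * (c + n + (p - 1))
        ≤ (c + n) ^ p * (∏ i ∈ range n, (c + i)) * (c + n + (p - 1)) := by
          gcongr
          linarith [(Nat.cast_nonneg n : (0 : ℝ) ≤ n)]
      _ = (c + n) ^ p * (c + n + (p - 1)) * ∏ i ∈ range n, (c + i) := by ring
      _ ≤ (c + n + 1) ^ p * (c + n) * ∏ i ∈ range n, (c + i) := by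
          gcongr
      _ = (c + n + 1) ^ p * ((∏ i ∈ range n, (c + i)) * (c + n)) := by ring

lemma add_one_le_max_inv_one_mul_add {x r : ℝ} (hx : 0 ≤ x) (hr : 0 < r) :
    x + 1 ≤ max r⁻¹ 1 * (x + r) := by
  have hM : 1 ≤ max r⁻¹ 1 := le_max_right _ _
  have hMr : 1 ≤ max r⁻¹ 1 * r := by
    calc (1 : ℝ) = r⁻¹ * r := (inv_mul_cancel₀ hr.ne').symm
      _ ≤ max r⁻¹ 1 * r := by gcongr; exact le_max_left _ _
  nlinarith

lemma prod_add_le_max_inv_one_mul_rpow_mul_prod {x a r : ℝ} (hx : 0 ≤ x) (ha : 0 ≤ a)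
    (hr : 0 < r) (n : ℕ) :
    ∏ i ∈ range n, (x + a + i) ≤ max r⁻¹ 1 * (1 + n) ^ (1 + a) * ∏ i ∈ range n, (x + r + i) := by
  rcases n with _ | m
  · simp
  set M := max r⁻¹ 1
  have hnum := rpow_mul_prod_add_sub_one_le (c := x + 1) (by positivity) ha (by linarith) (m + 1)
  simp_rw [show ∀ i : ℕ, x + 1 + i + (a - 1) = x + a + i from fun i => by ring] at hnum
  have hden : (x + 1) * ∏ i ∈ range m, (x + 1 + i) ≤ M * ∏ i ∈ range (m + 1), (x + r + i) := by
    calc (x + 1) * ∏ i ∈ range m, (x + 1 + i)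
        ≤ M * (x + r) * ∏ i ∈ range m, (x + r + (i + 1 : ℕ)) := by
          gcongr ?_ * ∏ i ∈ range m, ?_ with i
          · exact add_one_le_max_inv_one_mul_add hx hr
          · push_cast; linarith
      _ = M * ∏ i ∈ range (m + 1), (x + r + i) := by
          rw [prod_range_succ', Nat.cast_zero, add_zero]; ring
  have hx1 : 0 < x + 1 := by positivity
  refine le_of_mul_le_mul_left ?_ (Real.rpow_pos_of_pos hx1 (1 + a))
  push_cast at hnum hden ⊢
  calc (x + 1) ^ (1 + a) * ∏ i ∈ range (m + 1), (x + a + i)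
      = (x + 1) * ((x + 1) ^ a * ∏ i ∈ range (m + 1), (x + a + i)) := by
        rw [Real.rpow_add hx1, Real.rpow_one]; ring
    _ ≤ (x + 1) * ((x + 1 + (m + 1)) ^ a * ∏ i ∈ range (m + 1), (x + 1 + i)) := by gcongr
    _ = (x + 1 + (m + 1)) ^ a * (x + 1 + m) * ((x + 1) * ∏ i ∈ range m, (x + 1 + i)) := by
        rw [prod_range_succ]; ring
    _ ≤ ((x + 1) * (1 + (m + 1))) ^ a * ((x + 1) * (1 + (m + 1)))
          * (M * ∏ i ∈ range (m + 1), (x + r + i)) := by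
        gcongr <;> nlinarith
    _ = (x + 1) ^ (1 + a) * (M * (1 + (m + 1)) ^ (1 + a) * ∏ i ∈ range (m + 1), (x + r + i)) := by
        rw [Real.mul_rpow hx1.le (by positivity), Real.rpow_add hx1, Real.rpow_add (by positivity),
          Real.rpow_one, Real.rpow_one]
        ring

lemma norm_poch_le (z : ℂ) (n : ℕ) : ‖poch z n‖ ≤ ∏ i ∈ range n, (‖z‖ + i) := by
  rw [poch, norm_prod]
  exact prod_le_prod (fun i _ => norm_nonneg _)
    fun i _ => (norm_add_le _ _).trans_eq (by rw [norm_natCast])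

lemma prod_re_add_le_norm_poch {z : ℂ} (hz : 0 ≤ z.re) (n : ℕ) :
    ∏ i ∈ range n, (z.re + i) ≤ ‖poch z n‖ := by
  rw [poch, norm_prod]
  exact prod_le_prod (fun i _ => by positivity) fun i _ => by simpa using re_le_norm (z + i)

theorem poch_ratio_bound (k n : ℕ) (v : ℂ) (u : ℂ) (hu : 0 < u.re) :
    ‖poch ((k : ℂ) + v) n / poch ((k : ℂ) + u) n‖ ≤
      max (u.re)⁻¹ 1 * (1 + (n : ℝ)) ^ (1 + ‖v‖) := by
  have hre : ((k : ℂ) + u).re = k + u.re := by simp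
  have hden := prod_re_add_le_norm_poch (z := (k : ℂ) + u) (by rw [hre]; positivity) n
  rw [hre] at hden
  have hden_pos : 0 < ∏ i ∈ range n, ((k : ℝ) + u.re + i) := prod_pos fun i _ => by positivity
  rw [norm_div, div_le_iff₀ (hden_pos.trans_le hden)]
  calc ‖poch ((k : ℂ) + v) n‖ ≤ ∏ i ∈ range n, (‖(k : ℂ) + v‖ + i) := norm_poch_le _ n
    _ ≤ ∏ i ∈ range n, ((k : ℝ) + ‖v‖ + i) :=
        prod_le_prod (fun i _ => by positivity) fun i _ => by
          gcongr; exact (norm_add_le _ _).trans_eq (by rw [norm_natCast])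
    _ ≤ max u.re⁻¹ 1 * (1 + n) ^ (1 + ‖v‖) * ∏ i ∈ range n, ((k : ℝ) + u.re + i) :=
        prod_add_le_max_inv_one_mul_rpow_mul_prod k.cast_nonneg (norm_nonneg v) hu n
    _ ≤ max u.re⁻¹ 1 * (1 + n) ^ (1 + ‖v‖) * ‖poch ((k : ℂ) + u) n‖ := by gcongr
end

section
/- Let b, c, d, f ∈ ℂ with Re b > 0 and Re c > 0. Then for all ρ ∈ ℂ with |ρ| < 1, (1−ρ)^{d−c} · ₂F₁(b−f, d; b; ρ) = Σ_{m=0}^∞ (ρ^m/m!) (c)_m · ₃F₂(−m, d, f; b, c; 1), where the ₃F₂ is a terminating hypergeometric sum. -/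
open Complex Finset

/-- The Gauss hypergeometric series `₂F₁(a, b; c; z)` as a formal sum. -/
noncomputable def F21 (a b c z : ℂ) : ℂ :=
  ∑' n : ℕ, poch a n * poch b n / (poch c n * n.factorial) * z ^ n

/-- The terminating `₃F₂(-m, d, f; b, c; 1)`. -/
noncomputable def F32term (m : ℕ) (d f b c : ℂ) : ℂ :=
  ∑ l ∈ Finset.range (m + 1),
    poch (-(m : ℂ)) l * poch d l * poch f l / (poch b l * poch c l * l.factorial)

/-!
Expand `(1 - ρ) ^ (d - c) = ∑ₖ (c - d)ₖ / k! ρᵏ` by the binomial series and multiply it with the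
`₂F₁` series; both converge absolutely for `‖ρ‖ < 1`, so the left side is a Cauchy product and it
suffices to compare coefficients of `ρᵐ`, a finite identity. By Chu–Vandermonde,
`(b - f)ₗ / (b)ₗ = ∑ᵢ (l choose i) (-1)ⁱ (f)ᵢ / (b)ᵢ`; after reordering the resulting triple sum,
Vandermonde's identity collapses the inner sum to `(c + i)ₘ₋ᵢ / (m - i)!`, and
`(-m)ᵢ / m! = (-1)ⁱ / (m - i)!` turns what is left into `(c)ₘ / m! · ₃F₂(-m, d, f; b, c; 1)`.
Both Vandermonde identities are instances of `Ring.add_choose_eq`, read through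
`(x)ₙ / n! = Ring.multichoose x n`.
-/

open Nat

lemma poch_eq_eval (z : ℂ) (n : ℕ) : poch z n = (ascPochhammer ℂ n).eval z := by
  induction n with
  | zero => simp [poch]
  | succ n ih => rw [poch, prod_range_succ, ← poch, ih, ascPochhammer_succ_eval]

lemma poch_add (z : ℂ) (m n : ℕ) : poch z (m + n) = poch z m * poch (z + m) n := by
  simp only [poch, prod_range_add, cast_add, add_assoc]

lemma poch_ne_zero {z : ℂ} (hz : ∀ k : ℕ, z + k ≠ 0) (n : ℕ) : poch z n ≠ 0 :=
  prod_ne_zero_iff.2 fun k _ => hz k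

lemma add_natCast_ne_zero_of_re_pos {z : ℂ} (hz : 0 < z.re) (k : ℕ) : z + k ≠ 0 := by
  intro h
  have := congrArg re h
  simp only [add_re, natCast_re, zero_re] at this
  linarith [k.cast_nonneg (α := ℝ)]

lemma poch_neg_natCast_mul_factorial (i n : ℕ) :
    poch (-((i + n : ℕ) : ℂ)) i * n ! = (-1) ^ i * (i + n)! := by
  have h := factorial_mul_descFactorial (le_add_right i n)
  rw [Nat.add_sub_cancel_left] at h
  rw [poch_eq_eval, ascPochhammer_eval_neg_eq_descPochhammer, descPochhammer_eval_eq_descFactorial,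
    mul_assoc, ← cast_mul, mul_comm (descFactorial _ _), h]

lemma poch_div_factorial (z : ℂ) (n : ℕ) : poch z n / n ! = Ring.multichoose z n := by
  rw [div_eq_iff (cast_ne_zero.2 n.factorial_ne_zero), poch_eq_eval,
    ← Polynomial.ascPochhammer_smeval_eq_eval, ← Ring.factorial_nsmul_multichoose_eq_ascPochhammer,
    nsmul_eq_mul, mul_comm]

namespace Ring
variable {R : Type*} [CommRing R] [BinomialRing R]

lemma choose_neg_eq_neg_one_pow_mul (x : R) (n : ℕ) :
    choose (-x) n = (-1) ^ n * multichoose x n := by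
  simp [choose_neg', Units.smul_def, zsmul_eq_mul]

lemma multichoose_add (x y : R) (k : ℕ) :
    multichoose (x + y) k = ∑ p ∈ antidiagonal k, multichoose x p.1 * multichoose y p.2 := by
  have h := add_choose_eq (r := -x) (s := -y) k (Commute.all _ _)
  rw [← neg_add, choose_neg_eq_neg_one_pow_mul] at h
  refine (isUnit_neg_one.pow k).mul_left_cancel ?_
  rw [h, mul_sum]
  refine sum_congr rfl fun p hp => ?_
  rw [choose_neg_eq_neg_one_pow_mul, choose_neg_eq_neg_one_pow_mul, ← mem_antidiagonal.1 hp,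
    pow_add]
  ring

/-- Vandermonde's identity for the falling factorials at `-f` and `b + l - 1`. -/
lemma multichoose_sub (b f : R) (l : ℕ) :
    multichoose (b - f) l =
      ∑ p ∈ antidiagonal l, (-1) ^ p.1 * multichoose f p.1 * multichoose (b + p.1) p.2 := by
  rw [multichoose_eq, show b - f + l - 1 = -f + (b + l - 1) by ring,
    add_choose_eq _ (Commute.all _ _)]
  refine sum_congr rfl fun p hp => ?_
  rw [choose_neg_eq_neg_one_pow_mul, multichoose_eq (b + _), ← mem_antidiagonal.1 hp]
  push_cast
  ring_nf
end Ring

lemma sum_antidiagonal_rotate {M : Type*} [AddCommMonoid M] (g : ℕ → ℕ → ℕ → M) (m : ℕ) :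
    ∑ p ∈ antidiagonal m, ∑ q ∈ antidiagonal p.2, g p.1 q.1 q.2 =
      ∑ p ∈ antidiagonal m, ∑ q ∈ antidiagonal p.2, g q.2 p.1 q.1 := by
  simp only [sum_sigma']
  apply sum_nbij' (fun x => ⟨(x.2.1, x.2.2 + x.1.1), (x.2.2, x.1.1)⟩)
    (fun x => ⟨(x.2.2, x.1.1 + x.2.1), (x.1.1, x.2.1)⟩) <;>
  aesop (add simp [add_assoc, add_comm, add_left_comm])

lemma poch_sub_mul_poch_div_eq_sum (b d f : ℂ) (hb : ∀ k : ℕ, b + k ≠ 0) (l : ℕ) :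
    poch (b - f) l * poch d l / (poch b l * l !) =
      ∑ p ∈ antidiagonal l, (-1) ^ p.1 * poch f p.1 * poch d p.1 / (poch b p.1 * p.1 !) *
        Ring.multichoose (d + p.1) p.2 := by
  rw [show poch (b - f) l * poch d l / (poch b l * l !) =
      Ring.multichoose (b - f) l * poch d l / poch b l by rw [← poch_div_factorial]; ring,
    Ring.multichoose_sub, sum_mul, sum_div]
  refine sum_congr rfl fun p hp => ?_
  rw [← mem_antidiagonal.1 hp]
  simp only [← poch_div_factorial, poch_add]
  have := poch_ne_zero hb p.1
  have := poch_ne_zero (z := b + p.1) (fun k => by simpa [add_assoc] using hb (p.1 + k)) p.2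
  field_simp

lemma poch_div_factorial_mul_F32term_summand (b c d f : ℂ) (hc : ∀ k : ℕ, c + k ≠ 0) (i n : ℕ) :
    poch c (i + n) / (i + n)! *
        (poch (-((i + n : ℕ) : ℂ)) i * poch d i * poch f i / (poch b i * poch c i * i !)) =
      (-1) ^ i * poch f i * poch d i / (poch b i * i !) * Ring.multichoose (c + i) n := by
  have h : poch (-((i + n : ℕ) : ℂ)) i / (i + n)! = (-1) ^ i / n ! := by
    rw [div_eq_div_iff (cast_ne_zero.2 (factorial_ne_zero _))
      (cast_ne_zero.2 (factorial_ne_zero _))]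
    linear_combination poch_neg_natCast_mul_factorial i n
  rw [← poch_div_factorial, poch_add]
  calc _ = poch (-((i + n : ℕ) : ℂ)) i / (i + n)! * (poch c i / poch c i) *
        (poch (c + i) n * poch d i * poch f i / (poch b i * i !)) := by ring
    _ = _ := by rw [h, div_self (poch_ne_zero hc i)]; ring

lemma sum_antidiagonal_multichoose_mul_eq_F32term (b c d f : ℂ) (hb : ∀ k : ℕ, b + k ≠ 0)
    (hc : ∀ k : ℕ, c + k ≠ 0) (m : ℕ) :
    ∑ p ∈ antidiagonal m, Ring.multichoose (c - d) p.1 *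
        (poch (b - f) p.2 * poch d p.2 / (poch b p.2 * p.2 !)) =
      poch c m / m ! * F32term m d f b c := by
  simp_rw [poch_sub_mul_poch_div_eq_sum b d f hb, mul_sum]
  rw [sum_antidiagonal_rotate (fun k i j => Ring.multichoose (c - d) k *
    ((-1) ^ i * poch f i * poch d i / (poch b i * i !) * Ring.multichoose (d + i) j)),
    F32term, mul_sum, ← Nat.sum_antidiagonal_eq_sum_range_succ (fun i _ => poch c m / m ! *
      (poch (-(m : ℂ)) i * poch d i * poch f i / (poch b i * poch c i * i !)))]
  refine sum_congr rfl fun p hp => ?_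
  rw [← mem_antidiagonal.1 hp, poch_div_factorial_mul_F32term_summand b c d f hc,
    show c + p.1 = d + p.1 + (c - d) by ring, Ring.multichoose_add, mul_sum]
  refine sum_congr rfl fun q _ => ?_
  ring

lemma one_le_radius_ordinaryHypergeometricSeries {𝕂 𝔸 : Type*} [RCLike 𝕂]
    [NormedDivisionRing 𝔸] [NormedAlgebra 𝕂 𝔸] (a b : 𝕂) {c : 𝕂} (hc : ∀ k : ℕ, (k : 𝕂) ≠ -c) :
    1 ≤ (ordinaryHypergeometricSeries 𝔸 a b c).radius := by
  by_cases ha : ∃ k : ℕ, (k : 𝕂) = -a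
  · obtain ⟨k, hk⟩ := ha
    rw [neg_eq_iff_eq_neg.1 hk.symm, ordinaryHypergeometric_radius_top_of_neg_nat₁]
    exact le_top
  by_cases hb : ∃ k : ℕ, (k : 𝕂) = -b
  · obtain ⟨k, hk⟩ := hb
    rw [neg_eq_iff_eq_neg.1 hk.symm, ordinaryHypergeometric_radius_top_of_neg_nat₂]
    exact le_top
  push Not at ha hb
  exact (ordinaryHypergeometricSeries_radius_eq_one 𝔸 a b c fun k => ⟨ha k, hb k, hc k⟩).ge

lemma summable_norm_F21_term (a b : ℂ) {c z : ℂ} (hc : ∀ k : ℕ, c + k ≠ 0) (hz : ‖z‖ < 1) :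
    Summable fun n => ‖poch a n * poch b n / (poch c n * n !) * z ^ n‖ := by
  have hc' : ∀ k : ℕ, (k : ℂ) ≠ -c := fun k h => hc k (by rw [h, add_neg_cancel])
  have hz' : z ∈ Metric.eball (0 : ℂ) (ordinaryHypergeometricSeries ℂ a b c).radius :=
    Metric.eball_subset_eball (one_le_radius_ordinaryHypergeometricSeries a b hc')
      (by simpa [mem_eball_zero_iff, ← ofReal_norm] using hz)
  refine (FormalMultilinearSeries.summable_norm_apply _ hz').congr fun n => ?_
  rw [ordinaryHypergeometricSeries_apply_eq, smul_eq_mul, poch_eq_eval, poch_eq_eval,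
    poch_eq_eval]
  ring

lemma hasSum_multichoose_mul_pow (a : ℂ) {z : ℂ} (hz : ‖z‖ < 1) :
    HasSum (fun n => Ring.multichoose a n * z ^ n) ((1 - z) ^ (-a)) := by
  simpa [FormalMultilinearSeries.ofScalars_apply_eq, Ring.multichoose_eq, cpow_neg, mul_comm]
    using (one_div_one_sub_cpow_hasFPowerSeriesOnBall_zero a).hasSum
      (by simpa [mem_eball_zero_iff, ← ofReal_norm] using hz)

lemma summable_norm_multichoose_mul_pow (a : ℂ) {z : ℂ} (hz : ‖z‖ < 1) :
    Summable fun n => ‖Ring.multichoose a n * z ^ n‖ := by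
  have hz' : z ∈ Metric.eball (0 : ℂ) 1 := by simpa [mem_eball_zero_iff, ← ofReal_norm] using hz
  simpa [FormalMultilinearSeries.ofScalars_apply_eq, Ring.multichoose_eq, mul_comm]
    using FormalMultilinearSeries.summable_norm_apply _
      (Metric.eball_subset_eball (one_div_one_sub_cpow_hasFPowerSeriesOnBall_zero a).r_le hz')

theorem cdh_lemma6 (b c d f : ℂ) (hb : 0 < b.re) (hc : 0 < c.re)
    (ρ : ℂ) (hρ : ‖ρ‖ < 1) :
    (1 - ρ) ^ (d - c) * F21 (b - f) d b ρ =
      ∑' m : ℕ, ρ ^ m / m.factorial * poch c m * F32term m d f b c := by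
  have hb' := add_natCast_ne_zero_of_re_pos hb
  have hc' := add_natCast_ne_zero_of_re_pos hc
  have hbin := hasSum_multichoose_mul_pow (c - d) hρ
  rw [neg_sub] at hbin
  rw [← hbin.tsum_eq, F21, tsum_mul_tsum_eq_tsum_sum_antidiagonal_of_summable_norm
    (summable_norm_multichoose_mul_pow (c - d) hρ) (summable_norm_F21_term _ _ hb' hρ)]
  refine tsum_congr fun m => ?_
  rw [show ρ ^ m / m ! * poch c m * F32term m d f b c =
      ρ ^ m * (poch c m / m ! * F32term m d f b c) by ring,
    ← sum_antidiagonal_multichoose_mul_eq_F32term b c d f hb' hc', mul_sum]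
  refine sum_congr rfl fun p hp => ?_
  rw [← mem_antidiagonal.1 hp, pow_add]
  ring
end

section
/- Let a, b ∈ ℂ with positive real parts and x ∈ ℝ. Then there exists a constant σ ≥ 0 independent of n such that |p_n(x; a, b, ā, b̄)| ≤ n! (1+n)^σ for all n ∈ ℕ₀. In fact one may take σ = 2(|a+ix| + |b+ix|) + 1. -/
open Complex Finset

/-- The continuous Hahn polynomial `p_n(x; a, b, ā, b̄)` via its terminating
`₃F₂` representation. -/
noncomputable def cHahn (n : ℕ) (x : ℝ) (a b : ℂ) : ℂ :=
  Complex.I ^ n * poch ((2 * a.re : ℝ) : ℂ) n * poch (a + (starRingEnd ℂ) b) n /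
      (n.factorial : ℂ) *
    ∑ j ∈ Finset.range (n + 1),
      poch (-(n : ℂ)) j * poch ((n : ℂ) + 2 * a.re + 2 * b.re - 1) j *
          poch (a + Complex.I * x) j /
        (poch ((2 * a.re : ℝ) : ℂ) j * poch (a + (starRingEnd ℂ) b) j * j.factorial)

/-!
Write `u = a + ix`, `w = b + ix`, `A = 2 Re a`, `B = 2 Re b`, so that `ā - ix = A - u` and
`a + b̄ = u - w + B`. Expanding `(u - w + B + j)_{n-j}` in the ₃F₂ by Chu–Vandermonde, and
`(A - u)_{n-k}` in the symmetric sum `Σ (-1)ᵏ C(n,k) (u)_k (w)_k (ū)_{n-k} (w̄)_{n-k}` by its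
falling-factorial form, and resumming both double sums along diagonals, the two sides become the
same single sum; hence `n! pₙ = iⁿ Σ (-1)ᵏ C(n,k) (u)_k (w)_k (ū)_{n-k} (w̄)_{n-k}`.

For the bound, `|(v)_m| ≤ (|v|)_m ≤ m! (1+m)^{|v|}` (induction on `m`, with Bernoulli's
inequality in the step), so the `k`-th term is at most
`C(n,k) (k! (n-k)!)² (1+n)^{2(|u|+|w|)} ≤ n!² (1+n)^{σ-1}`, and the `n + 1` terms supply the last
factor `1 + n`.
-/

lemma Finset.sum_choose_mul_sum_choose {R : Type*} [CommSemiring R] (n : ℕ) (F : ℕ → ℕ → R) :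
    ∑ j ∈ range (n + 1), (n.choose j : R) *
        ∑ k ∈ range (n - j + 1), ((n - j).choose k : R) * F j k =
      ∑ m ∈ range (n + 1), (n.choose m : R) *
        ∑ j ∈ range (m + 1), (m.choose j : R) * F j (m - j) := by
  have hflip := sum_range_diag_flip (n + 1) fun j k ↦ (n.choose j : R) * ((n - j).choose k * F j k)
  simp only [mul_sum]
  rw [sum_congr rfl fun j hj ↦ by rw [← Nat.sub_add_comm (Nat.lt_succ_iff.mp (mem_range.mp hj))],
    ← hflip]
  refine sum_congr rfl fun m hm ↦ sum_congr rfl fun j hj ↦ ?_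
  have hjm := Nat.lt_succ_iff.mp (mem_range.mp hj)
  rw [← mul_assoc, ← mul_assoc, ← Nat.cast_mul, ← Nat.cast_mul, Nat.choose_mul hjm]

namespace poch

@[simp] lemma zero (z : ℂ) : poch z 0 = 1 := by simp [poch]

lemma succ (z : ℂ) (n : ℕ) : poch z (n + 1) = poch z n * (z + n) := by
  simp [poch, prod_range_succ]

lemma add (z : ℂ) (m k : ℕ) : poch z (m + k) = poch z m * poch (z + m) k := by
  simp only [poch, prod_range_add, Nat.cast_add, add_assoc]

lemma add_of_le (z : ℂ) {m n : ℕ} (h : m ≤ n) :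
    poch z n = poch z m * poch (z + m) (n - m) := by
  rw [← add, Nat.add_sub_cancel' h]

lemma add_natCast_split (z : ℂ) {j m n : ℕ} (hjm : j ≤ m) (hmn : m ≤ n) :
    poch (z + j) (n - j) = poch (z + j) (m - j) * poch (z + m) (n - m) := by
  rw [add_of_le (z + j) (Nat.sub_le_sub_right hmn j), Nat.cast_sub hjm,
    Nat.sub_sub_sub_cancel_right hjm, add_add_sub_cancel]

lemma neg (z : ℂ) (m : ℕ) : poch (-z) m = (-1) ^ m * poch (z - m + 1) m := by
  rw [poch, poch, ← prod_range_reflect, show (-1 : ℂ) ^ m = ∏ _i ∈ range m, (-1 : ℂ) by simp,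
    ← prod_mul_distrib]
  refine prod_congr rfl fun i hi ↦ ?_
  have hi : i < m := mem_range.mp hi
  rw [Nat.cast_sub (by omega), Nat.cast_sub (by omega)]
  push_cast
  ring

lemma ne_zero {z : ℂ} (hz : 0 < z.re) (m : ℕ) : poch z m ≠ 0 :=
  prod_ne_zero_iff.mpr fun i _ h ↦ by
    have := congrArg re h
    simp only [add_re, natCast_re, zero_re] at this
    linarith [(Nat.cast_nonneg i : (0 : ℝ) ≤ i)]

lemma factorial_mul_natCast_add_one (k j : ℕ) :
    (k.factorial : ℂ) * poch ((k : ℂ) + 1) j = ((k + j).factorial : ℂ) := by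
  induction j with
  | zero => simp
  | succ j ih =>
    rw [succ, ← mul_assoc, ih, ← add_assoc, Nat.factorial_succ]
    push_cast
    ring

lemma neg_natCast {n j : ℕ} (h : j ≤ n) :
    poch (-n) j = (-1) ^ j * (n.choose j * j.factorial : ℕ) := by
  have hfac := factorial_mul_natCast_add_one (n - j) j
  have hchoose : ((n.choose j * j.factorial : ℕ) : ℂ) * (n - j).factorial = n.factorial := by
    exact_mod_cast Nat.choose_mul_factorial_mul_factorial h
  rw [Nat.sub_add_cancel h, Nat.cast_sub h] at hfac
  refine mul_right_cancel₀ (Nat.cast_ne_zero.mpr (n - j).factorial_ne_zero :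
    ((n - j).factorial : ℂ) ≠ 0) ?_
  rw [neg, mul_assoc, mul_assoc, hchoose, ← hfac]
  ring

lemma add_eq_sum (x y : ℂ) (n : ℕ) :
    poch (x + y) n = ∑ k ∈ range (n + 1), (n.choose k : ℂ) * (poch x k * poch y (n - k)) := by
  induction n with
  | zero => simp
  | succ n ih =>
    rw [sum_choose_succ_mul (fun i j ↦ poch x i * poch y j), succ, ih, sum_mul, ← sum_add_distrib]
    refine sum_congr rfl fun k hk ↦ ?_
    have hk : k ≤ n := Nat.lt_succ_iff.mp (mem_range.mp hk)
    rw [Nat.succ_sub hk, succ, succ, Nat.cast_sub hk]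
    ring

/-- Chu–Vandermonde for falling factorials: `(A + j)_{m-j}` is the falling factorial of
`A + m - 1` of length `m - j`. -/
lemma sub_eq_sum (A c : ℂ) (m : ℕ) :
    poch (A - c) m =
      ∑ j ∈ range (m + 1), (-1) ^ j * (m.choose j : ℂ) * poch c j * poch (A + j) (m - j) := by
  rw [show A - c = -(c - A) by ring, neg, show c - A - m + 1 = c + (1 - A - m) by ring, add_eq_sum,
    mul_sum]
  refine sum_congr rfl fun j hj ↦ ?_
  have hj : j ≤ m := Nat.lt_succ_iff.mp (mem_range.mp hj)
  have hA : poch (A + j) (m - j) = (-1) ^ (m - j) * poch (1 - A - m) (m - j) := by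
    rw [show 1 - A - m = -(A + m - 1) by ring, neg, ← mul_assoc, ← pow_add, ← two_mul, pow_mul,
      neg_one_sq, one_pow, one_mul, Nat.cast_sub hj]
    congr 1
    ring
  rw [hA, show (-1 : ℂ) ^ m = (-1) ^ j * (-1) ^ (m - j) by rw [← pow_add, Nat.add_sub_cancel' hj]]
  ring

end poch

lemma hypergeometric_sum_eq_diagonal_sum (n : ℕ) (u w A B : ℂ) :
    ∑ j ∈ range (n + 1), (-1) ^ j * (n.choose j : ℂ) * poch (n + A + B - 1) j * poch u j *
        poch (A + j) (n - j) * poch (u - w + B + j) (n - j) =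
      ∑ m ∈ range (n + 1), (n.choose m : ℂ) *
        (poch u m * poch (A + m) (n - m) * poch (B - w) (n - m) * poch (1 - n - B) m) := by
  have hexpand : ∀ j ∈ range (n + 1),
      (-1) ^ j * (n.choose j : ℂ) * poch (n + A + B - 1) j * poch u j *
        poch (A + j) (n - j) * poch (u - w + B + j) (n - j) =
      (n.choose j : ℂ) * ∑ k ∈ range (n - j + 1), ((n - j).choose k : ℂ) *
        ((-1) ^ j * poch (n + A + B - 1) j * poch u (j + k) * poch (A + j) (n - j) *
          poch (B - w) (n - j - k)) := by
    intro j _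
    rw [show u - w + B + j = (u + j) + (B - w) by ring, poch.add_eq_sum (u + j),
      mul_sum, mul_sum]
    refine sum_congr rfl fun k _ ↦ ?_
    rw [poch.add]
    ring
  rw [sum_congr rfl hexpand, sum_choose_mul_sum_choose]
  refine sum_congr rfl fun m hm ↦ ?_
  have hmn := Nat.lt_succ_iff.mp (mem_range.mp hm)
  rw [show 1 - n - B = A - (n + A + B - 1) by ring, poch.sub_eq_sum A]
  congr 1
  rw [mul_sum]
  refine sum_congr rfl fun j hj ↦ ?_
  have hjm := Nat.lt_succ_iff.mp (mem_range.mp hj)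
  rw [Nat.add_sub_cancel' hjm, Nat.sub_sub_sub_cancel_right hjm, poch.add_natCast_split A hjm hmn]
  ring

lemma symmetric_sum_eq_diagonal_sum (n : ℕ) (u w A B : ℂ) :
    ∑ k ∈ range (n + 1), (-1) ^ k * (n.choose k : ℂ) * poch u k * poch w k *
        poch (A - u) (n - k) * poch (B - w) (n - k) =
      ∑ m ∈ range (n + 1), (n.choose m : ℂ) *
        (poch u m * poch (A + m) (n - m) * poch (B - w) (n - m) * poch (1 - n - B) m) := by
  have hexpand : ∀ k ∈ range (n + 1),
      (-1) ^ k * (n.choose k : ℂ) * poch u k * poch w k *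
        poch (A - u) (n - k) * poch (B - w) (n - k) =
      (n.choose k : ℂ) * ∑ i ∈ range (n - k + 1), ((n - k).choose i : ℂ) *
        ((-1) ^ (k + i) * poch u (k + i) * poch (A + (k + i : ℕ)) (n - (k + i)) * poch w k *
          poch (B - w) (n - k)) := by
    intro k _
    rw [show A - u = (A + k) - (u + k) by ring, poch.sub_eq_sum (A + k) (u + k)]
    simp only [mul_sum, sum_mul]
    refine sum_congr rfl fun i _ ↦ ?_
    rw [poch.add, pow_add, Nat.sub_sub, Nat.cast_add, add_assoc]
    ring
  rw [sum_congr rfl hexpand, sum_choose_mul_sum_choose]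
  refine sum_congr rfl fun m hm ↦ congrArg _ ?_
  have hmn := Nat.lt_succ_iff.mp (mem_range.mp hm)
  have hinner : ∀ k ∈ range (m + 1),
      (m.choose k : ℂ) * ((-1) ^ (k + (m - k)) * poch u (k + (m - k)) *
        poch (A + (k + (m - k) : ℕ)) (n - (k + (m - k))) * poch w k * poch (B - w) (n - k)) =
      ((-1) ^ m * poch u m * poch (A + m) (n - m) * poch (B - w) (n - m)) *
        ((m.choose k : ℂ) * (poch w k * poch (B - w + (n - m : ℕ)) (m - k))) := by
    intro k hk
    have hkm := Nat.lt_succ_iff.mp (mem_range.mp hk)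
    rw [Nat.add_sub_cancel' hkm, ← Nat.sub_add_sub_cancel hmn hkm, poch.add]
    ring
  have hsign : poch (1 - n - B) m = (-1) ^ m * poch (w + (B - w + (n - m : ℕ))) m := by
    rw [show 1 - n - B = -(n + B - 1) by ring, poch.neg, Nat.cast_sub hmn]
    congr 2
    ring
  rw [sum_congr rfl hinner, ← mul_sum, ← poch.add_eq_sum, hsign]
  ring

lemma poch_mul_poch_mul_sum_div (n : ℕ) {A E : ℂ} (hA : poch A n ≠ 0) (hE : poch E n ≠ 0)
    (c u : ℂ) :
    poch A n * poch E n * ∑ j ∈ range (n + 1),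
        poch (-n) j * poch c j * poch u j / (poch A j * poch E j * j.factorial) =
      ∑ j ∈ range (n + 1), (-1) ^ j * (n.choose j : ℂ) * poch c j * poch u j *
        poch (A + j) (n - j) * poch (E + j) (n - j) := by
  rw [mul_sum]
  refine sum_congr rfl fun j hj ↦ ?_
  have hjn := Nat.lt_succ_iff.mp (mem_range.mp hj)
  have hAj : poch A j ≠ 0 := left_ne_zero_of_mul (poch.add_of_le A hjn ▸ hA)
  have hEj : poch E j ≠ 0 := left_ne_zero_of_mul (poch.add_of_le E hjn ▸ hE)
  have hj : (j.factorial : ℂ) ≠ 0 := Nat.cast_ne_zero.mpr j.factorial_ne_zero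
  rw [poch.add_of_le A hjn, poch.add_of_le E hjn, poch.neg_natCast hjn]
  field_simp
  push_cast
  ring

lemma conj_add_I_mul_ofReal (z : ℂ) (x : ℝ) :
    (starRingEnd ℂ) (z + I * x) = ((2 * z.re : ℝ) : ℂ) - (z + I * x) := by
  rw [map_add, map_mul, conj_I, conj_ofReal]
  linear_combination add_conj z

theorem cHahn_eq_sum (n : ℕ) (x : ℝ) {a b : ℂ} (ha : 0 < a.re) (hb : 0 < b.re) :
    cHahn n x a b = I ^ n / n.factorial *
      ∑ k ∈ range (n + 1), (-1) ^ k * (n.choose k : ℂ) * poch (a + I * x) k * poch (b + I * x) k *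
        poch ((starRingEnd ℂ) (a + I * x)) (n - k) *
        poch ((starRingEnd ℂ) (b + I * x)) (n - k) := by
  have hA : poch ((2 * a.re : ℝ) : ℂ) n ≠ 0 := poch.ne_zero (by simpa using ha) n
  have hE : poch (a + (starRingEnd ℂ) b) n ≠ 0 := poch.ne_zero (by simp only [add_re, conj_re]; linarith) n
  have hc : (n : ℂ) + 2 * a.re + 2 * b.re - 1 =
      n + ((2 * a.re : ℝ) : ℂ) + ((2 * b.re : ℝ) : ℂ) - 1 := by
    push_cast; ring
  have hE' : a + (starRingEnd ℂ) b = (a + I * x) - (b + I * x) + ((2 * b.re : ℝ) : ℂ) := by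
    linear_combination add_conj b
  rw [cHahn, mul_assoc (I ^ n), mul_div_right_comm, mul_assoc,
    poch_mul_poch_mul_sum_div n hA hE, hc, hE', hypergeometric_sum_eq_diagonal_sum,
    ← symmetric_sum_eq_diagonal_sum, conj_add_I_mul_ofReal, conj_add_I_mul_ofReal]

lemma add_mul_rpow_le {c t : ℝ} (hc : 0 ≤ c) (ht : 0 ≤ t) :
    (c + t) * (1 + t) ^ c ≤ (1 + t) * (2 + t) ^ c := by
  have ht' : 0 < 1 + t := by linarith
  have hsplit : 2 + t = (1 + t) * (1 + (1 + t)⁻¹) := by field_simp; ring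
  have hkey : c + t ≤ (1 + t) * (1 + (1 + t)⁻¹) ^ c := by
    rcases le_or_gt 1 c with hc1 | hc1
    · have := one_add_mul_self_le_rpow_one_add (by linarith [inv_nonneg.mpr ht'.le]) hc1
      have hle := mul_le_mul_of_nonneg_left this ht'.le
      rw [mul_add, mul_one, mul_left_comm, mul_inv_cancel₀ ht'.ne', mul_one] at hle
      linarith
    · have := Real.one_le_rpow (le_add_of_nonneg_right (inv_nonneg.mpr ht'.le)) hc
      nlinarith
  rw [hsplit, Real.mul_rpow ht'.le (by positivity)]
  calc (c + t) * (1 + t) ^ c ≤ (1 + t) * (1 + (1 + t)⁻¹) ^ c * (1 + t) ^ c := by gcongr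
    _ = _ := by ring

lemma prod_range_add_natCast_le {c : ℝ} (hc : 0 ≤ c) (m : ℕ) :
    ∏ i ∈ range m, (c + i) ≤ m.factorial * (1 + m) ^ c := by
  induction m with
  | zero => simp
  | succ m ih =>
    rw [prod_range_succ, Nat.factorial_succ]
    calc (∏ i ∈ range m, (c + i)) * (c + m) ≤ m.factorial * (1 + m) ^ c * (c + m) := by gcongr
      _ = m.factorial * ((c + m) * (1 + m) ^ c) := by ring
      _ ≤ m.factorial * ((1 + m) * (2 + m) ^ c) :=
          mul_le_mul_of_nonneg_left (add_mul_rpow_le hc m.cast_nonneg) (by positivity)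
      _ = _ := by push_cast; ring_nf

lemma norm_poch_le_s10 (v : ℂ) (m : ℕ) : ‖poch v m‖ ≤ m.factorial * (1 + m) ^ ‖v‖ :=
  calc ‖poch v m‖ ≤ ∏ i ∈ range m, (‖v‖ + i) :=
        (Finset.norm_prod_le _ _).trans <| prod_le_prod (fun _ _ ↦ norm_nonneg _) fun i _ ↦
          (norm_add_le _ _).trans_eq (by simp)
    _ ≤ _ := prod_range_add_natCast_le (norm_nonneg v) m

lemma norm_poch_mul_poch_le (v v' : ℂ) {k n : ℕ} (h : k ≤ n) :
    ‖poch v k * poch v' (n - k)‖ ≤ k.factorial * (n - k).factorial * (1 + n) ^ (‖v‖ + ‖v'‖) := by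
  rw [norm_mul, Real.rpow_add (by positivity)]
  calc ‖poch v k‖ * ‖poch v' (n - k)‖
      ≤ (k.factorial * (1 + k) ^ ‖v‖) * ((n - k).factorial * (1 + (n - k : ℕ)) ^ ‖v'‖) := by
        gcongr <;> exact norm_poch_le_s10 _ _
    _ ≤ (k.factorial * (1 + n) ^ ‖v‖) * ((n - k).factorial * (1 + n) ^ ‖v'‖) := by
        gcongr
        exact Nat.sub_le n k
    _ = _ := by ring

lemma norm_sum_choose_poch_le (n : ℕ) (u w u' w' : ℂ) :
    ‖∑ k ∈ range (n + 1), (-1) ^ k * (n.choose k : ℂ) * poch u k * poch w k *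
        poch u' (n - k) * poch w' (n - k)‖ ≤
      (n.factorial : ℝ) * n.factorial * (1 + (n : ℝ)) ^ (‖u‖ + ‖u'‖ + ‖w‖ + ‖w'‖ + 1) := by
  have hterm : ∀ k ∈ range (n + 1), ‖(-1) ^ k * (n.choose k : ℂ) * poch u k * poch w k *
      poch u' (n - k) * poch w' (n - k)‖ ≤
        (n.factorial : ℝ) * n.factorial * (1 + (n : ℝ)) ^ (‖u‖ + ‖u'‖ + ‖w‖ + ‖w'‖) := by
    intro k hk
    have hkn := Nat.lt_succ_iff.mp (mem_range.mp hk)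
    have hchoose : (n.choose k * (k.factorial * (n - k).factorial) : ℝ) = n.factorial := by
      rw [← mul_assoc]; exact_mod_cast Nat.choose_mul_factorial_mul_factorial hkn
    have hfac : (k.factorial * (n - k).factorial : ℝ) ≤ n.factorial := by
      exact_mod_cast Nat.le_of_dvd n.factorial_pos (Nat.factorial_mul_factorial_dvd_factorial hkn)
    rw [show (-1) ^ k * (n.choose k : ℂ) * poch u k * poch w k * poch u' (n - k) * poch w' (n - k)
        = (-1) ^ k * n.choose k * (poch u k * poch u' (n - k)) * (poch w k * poch w' (n - k)) by
        ring, norm_mul, norm_mul, norm_mul, norm_pow, norm_neg, norm_one, one_pow, one_mul,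
      norm_natCast, add_assoc (‖u‖ + ‖u'‖), Real.rpow_add (by positivity)]
    calc _ ≤ (n.choose k : ℝ) * (k.factorial * (n - k).factorial * (1 + (n : ℝ)) ^ (‖u‖ + ‖u'‖)) *
          (k.factorial * (n - k).factorial * (1 + n) ^ (‖w‖ + ‖w'‖)) := by
          gcongr <;> exact norm_poch_mul_poch_le _ _ hkn
      _ = ((n.choose k : ℝ) * (k.factorial * (n - k).factorial)) *
          (k.factorial * (n - k).factorial) *
          ((1 + n) ^ (‖u‖ + ‖u'‖) * (1 + n) ^ (‖w‖ + ‖w'‖)) := by ring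
      _ ≤ _ := by rw [hchoose]; gcongr
  calc _ ≤ ∑ k ∈ range (n + 1),
        (n.factorial : ℝ) * n.factorial * (1 + (n : ℝ)) ^ (‖u‖ + ‖u'‖ + ‖w‖ + ‖w'‖) :=
        (norm_sum_le _ _).trans (sum_le_sum hterm)
    _ = _ := by
        rw [sum_const, card_range, nsmul_eq_mul, Real.rpow_add_one (by positivity)]
        push_cast
        ring

theorem cHahn_bound (a b : ℂ) (ha : 0 < a.re) (hb : 0 < b.re) (x : ℝ) :
    ∃ σ ≥ (0 : ℝ), σ = 2 * (‖a + Complex.I * x‖ + ‖b + Complex.I * x‖) + 1 ∧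
      ∀ n : ℕ, ‖cHahn n x a b‖ ≤ (n.factorial : ℝ) * (1 + (n : ℝ)) ^ σ := by
  refine ⟨_, by positivity, rfl, fun n ↦ ?_⟩
  rw [cHahn_eq_sum n x ha hb, norm_mul, norm_div, norm_pow, norm_I, one_pow, norm_natCast]
  calc _ ≤ 1 / (n.factorial : ℝ) * (n.factorial * n.factorial *
        (1 + (n : ℝ)) ^ (‖a + I * x‖ + ‖a + I * x‖ + ‖b + I * x‖ + ‖b + I * x‖ + 1)) := by
        gcongr
        have := norm_sum_choose_poch_le n (a + I * x) (b + I * x) ((starRingEnd ℂ) (a + I * x))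
          ((starRingEnd ℂ) (b + I * x))
        rwa [Complex.norm_conj, Complex.norm_conj] at this
    _ = _ := by
        field_simp
        ring_nf
end

section
/- Let λ > 0, φ, ψ ∈ (0, π), x ∈ ℝ, and ρ ∈ ℂ with |ρ|(sin φ + |sin(ψ−φ)|) < sin ψ. Define ρ̃ = ρ sin φ / (sin ψ − ρ sin(ψ−φ)). Then (1−e^{iφ}ρ)^{−λ+ix} (1−e^{−iφ}ρ)^{−λ−ix} = (1 − ρ sin(ψ−φ)/sin ψ)^{−2λ} · (1−e^{iψ}ρ̃)^{−λ+ix} (1−e^{−iψ}ρ̃)^{−λ−ix}. -/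
/-!
With `s = 1 - ρ sin(ψ - φ) / sin ψ` and `ρ̃ = ρ sin φ / (sin ψ - ρ sin(ψ - φ))`, the
trigonometric identity `sin(ψ - φ) + e^{±iψ} sin φ = e^{±iφ} sin ψ` gives the factorizations
`1 - e^{±iφ} ρ = s (1 - e^{±iψ} ρ̃)`. The hypothesis on `ρ` makes `‖1 - s‖ < 1` and `‖ρ̃‖ < 1`,
so all three bases lie in the right half-plane, where principal powers are multiplicative; the
two powers of `s` then combine to `s ^ (-2λ)`.
-/

open Complex

lemma mul_cpow_of_re_pos {a b : ℂ} (ha : 0 < a.re) (hb : 0 < b.re) (w : ℂ) :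
    (a * b) ^ w = a ^ w * b ^ w := by
  have ha0 : a ≠ 0 := by rintro rfl; simp at ha
  have hb0 : b ≠ 0 := by rintro rfl; simp at hb
  have hargs : arg a + arg b ∈ Set.Ioc (-Real.pi) Real.pi := by
    have hpa := abs_lt.1 (abs_arg_lt_pi_div_two_iff.2 (Or.inl ha))
    have hpb := abs_lt.1 (abs_arg_lt_pi_div_two_iff.2 (Or.inl hb))
    constructor <;> linarith [hpa.1, hpa.2, hpb.1, hpb.2]
  rw [cpow_def_of_ne_zero (mul_ne_zero ha0 hb0), cpow_def_of_ne_zero ha0,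
    cpow_def_of_ne_zero hb0, log_mul ha0 hb0 hargs, add_mul, exp_add]

lemma mul_cpow_mul_mul_cpow_of_re_pos {s t₁ t₂ : ℂ} (hs : 0 < s.re) (h₁ : 0 < t₁.re)
    (h₂ : 0 < t₂.re) (a b : ℂ) :
    (s * t₁) ^ a * (s * t₂) ^ b = s ^ (a + b) * (t₁ ^ a * t₂ ^ b) := by
  have hs0 : s ≠ 0 := by rintro rfl; simp at hs
  rw [mul_cpow_of_re_pos hs h₁, mul_cpow_of_re_pos hs h₂, cpow_add _ _ hs0]
  ring

lemma re_one_sub_pos_of_norm_lt_one {z : ℂ} (hz : ‖z‖ < 1) : 0 < (1 - z).re := by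
  simpa using (re_le_norm z).trans_lt hz

lemma norm_div_sub_lt_one {𝕜 : Type*} [NormedField 𝕜] {a b c : 𝕜}
    (h : ‖a‖ + ‖b‖ < ‖c‖) : ‖a / (c - b)‖ < 1 := by
  have hcb : ‖a‖ < ‖c - b‖ := by linarith [norm_sub_norm_le c b]
  rw [norm_div, div_lt_one ((norm_nonneg a).trans_lt hcb)]
  exact hcb

lemma sin_sub_add_exp_mul_sin (φ ψ : ℂ) :
    sin (ψ - φ) + exp (I * ψ) * sin φ = sin ψ * exp (I * φ) := by
  rw [mul_comm I, mul_comm I, exp_mul_I, exp_mul_I, sin_sub]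
  ring

lemma sin_sub_add_exp_neg_mul_sin (φ ψ : ℂ) :
    sin (ψ - φ) + exp (-I * ψ) * sin φ = sin ψ * exp (-I * φ) := by
  have h := sin_sub_add_exp_mul_sin (-φ) (-ψ)
  rw [show -ψ - -φ = -(ψ - φ) by ring, sin_neg, sin_neg, sin_neg] at h
  simp only [mul_neg, ← neg_mul] at h
  linear_combination -h

lemma one_sub_mul_eq_mul_of_add_mul_eq {K : Type*} [Field K] {e e' u v w : K} (ρ : K)
    (hw : w ≠ 0) (hd : w - ρ * u ≠ 0) (h : u + e' * v = w * e) :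
    1 - e * ρ = (1 - ρ * u / w) * (1 - e' * (ρ * v / (w - ρ * u))) := by
  field_simp
  linear_combination ρ * h

theorem MP_power_identity_general (lam : ℝ) (phi psi : ℝ)
    (hphi : phi ∈ Set.Ioo 0 Real.pi) (hpsi : psi ∈ Set.Ioo 0 Real.pi)
    (x : ℝ) (ρ : ℂ)
    (hρ : ‖ρ‖ * (Real.sin phi + |Real.sin (psi - phi)|) < Real.sin psi) :
    (1 - Complex.exp (Complex.I * phi) * ρ) ^ (-(lam : ℂ) + Complex.I * x) *
        (1 - Complex.exp (-Complex.I * phi) * ρ) ^ (-(lam : ℂ) - Complex.I * x) =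
      (1 - ρ * Real.sin (psi - phi) / Real.sin psi) ^ (-(2 * lam : ℝ) : ℂ) *
        ((1 - Complex.exp (Complex.I * psi) *
              (ρ * Real.sin phi / ((Real.sin psi : ℂ) - ρ * Real.sin (psi - phi)))) ^
            (-(lam : ℂ) + Complex.I * x) *
          (1 - Complex.exp (-Complex.I * psi) *
              (ρ * Real.sin phi / ((Real.sin psi : ℂ) - ρ * Real.sin (psi - phi)))) ^
            (-(lam : ℂ) - Complex.I * x)) := by
  have hsφ : 0 ≤ Real.sin phi := Real.sin_nonneg_of_nonneg_of_le_pi hphi.1.le hphi.2.le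
  have hsψ : 0 < Real.sin psi := Real.sin_pos_of_pos_of_lt_pi hpsi.1 hpsi.2
  have hbound : ‖ρ * (Real.sin phi : ℂ)‖ + ‖ρ * (Real.sin (psi - phi) : ℂ)‖
      < ‖(Real.sin psi : ℂ)‖ := by
    simp only [norm_mul, norm_real, Real.norm_eq_abs, abs_of_nonneg hsφ, abs_of_pos hsψ]
    linarith
  have hw : (Real.sin psi : ℂ) ≠ 0 := by exact_mod_cast hsψ.ne'
  have hd : (Real.sin psi : ℂ) - ρ * Real.sin (psi - phi) ≠ 0 := by
    rw [sub_ne_zero]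
    intro h
    rw [h] at hbound
    linarith [norm_nonneg (ρ * (Real.sin phi : ℂ))]
  have hs := re_one_sub_pos_of_norm_lt_one (z := ρ * Real.sin (psi - phi) / Real.sin psi) <| by
    rw [norm_div, div_lt_one (norm_pos_iff.2 hw)]
    linarith [norm_nonneg (ρ * (Real.sin phi : ℂ))]
  have hρ' := norm_div_sub_lt_one hbound
  have hpos : sin (↑(psi - phi)) + exp (I * psi) * sin phi = sin psi * exp (I * phi) := by
    push_cast; exact sin_sub_add_exp_mul_sin phi psi
  have hneg : sin (↑(psi - phi)) + exp (-I * psi) * sin phi = sin psi * exp (-I * phi) := by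
    push_cast; exact sin_sub_add_exp_neg_mul_sin phi psi
  rw [one_sub_mul_eq_mul_of_add_mul_eq ρ hw hd (by exact_mod_cast hpos),
    one_sub_mul_eq_mul_of_add_mul_eq ρ hw hd (by exact_mod_cast hneg),
    mul_cpow_mul_mul_cpow_of_re_pos hs
      (re_one_sub_pos_of_norm_lt_one (by simpa [norm_exp] using hρ'))
      (re_one_sub_pos_of_norm_lt_one (by simpa [norm_exp] using hρ'))]
  congr 2
  push_cast
  ring

theorem MP_power_identity (lam : ℝ) (hlam : 0 < lam) (phi psi : ℝ)
    (hphi : phi ∈ Set.Ioo 0 Real.pi) (hpsi : psi ∈ Set.Ioo 0 Real.pi)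
    (x : ℝ) (ρ : ℂ)
    (hρ : ‖ρ‖ * (Real.sin phi + |Real.sin (psi - phi)|) < Real.sin psi) :
    (1 - Complex.exp (Complex.I * phi) * ρ) ^ (-(lam : ℂ) + Complex.I * x) *
        (1 - Complex.exp (-Complex.I * phi) * ρ) ^ (-(lam : ℂ) - Complex.I * x) =
      (1 - ρ * Real.sin (psi - phi) / Real.sin psi) ^ (-(2 * lam : ℝ) : ℂ) *
        ((1 - Complex.exp (Complex.I * psi) *
              (ρ * Real.sin phi / ((Real.sin psi : ℂ) - ρ * Real.sin (psi - phi)))) ^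
            (-(lam : ℂ) + Complex.I * x) *
          (1 - Complex.exp (-Complex.I * psi) *
              (ρ * Real.sin phi / ((Real.sin psi : ℂ) - ρ * Real.sin (psi - phi)))) ^
            (-(lam : ℂ) - Complex.I * x)) :=
  MP_power_identity_general lam phi psi hphi hpsi x ρ hρ
end
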